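/- If p is an odd Ramanujan prime and m is the unique index with p_m < p/2 < p_{m+1}, then the open interval (p, 2p_{m+1}) contains a prime (i.e., p satisfies Condition 2). -/

import Mathlib

/-- `nthPrime n` is the n-th prime with 1-based indexing: p_1 = 2, p_2 = 3, ... -/
noncomputable def nthPrime (n : ℕ) : ℕ := Nat.nth Nat.Prime (n - 1)

/-- The n-th Ramanujan prime: the smallest positive integer R such that for all
integers x ≥ R one has π(x) − π(⌊x/2⌋) ≥ n. -/
noncomputable def ramanujan (n : ℕ) : ℕ :=
  sInf {R : ℕ | 0 < R ∧ ∀ x : ℕ, R ≤ x →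
    n ≤ Nat.primeCounting x - Nat.primeCounting (x / 2)}

/-- A Ramanujan prime is a number of the form R_n for some n ≥ 1. -/
def IsRamanujanPrime (p : ℕ) : Prop := ∃ n : ℕ, 1 ≤ n ∧ p = ramanujan n

/-! Let `p = R_n` and `b = p_{m+1}`, so that `π((p-1)/2) = m` and `π(b) = m + 1`. By minimality
of `R_n`, the inequality fails at `x = p - 1`: `π(p-1) - m < n`. If `(p, 2b)` held no prime, then,
`2b` being even, `π(2b) = π(p) = π(p-1) + 1`, and the inequality at `x = 2b ≥ p` would read
`n ≤ π(2b) - π(b) = π(p-1) - m`. -/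

open Nat
open scoped Nat.Prime

namespace Nat

theorem primeCounting_eq_of_nth_le_of_lt_nth {k y : ℕ} (h₁ : nth Prime k ≤ y)
    (h₂ : y < nth Prime (k + 1)) : π y = k + 1 := by
  apply le_antisymm
  · rw [primeCounting_eq_primeCounting'_succ, ← primeCounting'_nth_eq (k + 1)]
    exact monotone_primeCounting' h₂
  · calc k + 1 = π (nth Prime k) := by
          rw [primeCounting_eq_primeCounting'_succ, primeCounting', count_succ,
            if_pos (prime_nth_prime k)]
          exact congrArg (· + 1) (primeCounting'_nth_eq k).symm
      _ ≤ π y := monotone_primeCounting h₁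

theorem primeCounting_of_prime {p : ℕ} (hp : p.Prime) : π p = π (p - 1) + 1 := by
  rw [primeCounting_sub_one, primeCounting_eq_primeCounting'_succ, primeCounting',
    count_succ, if_pos hp]

theorem primeCounting_eq_of_forall_not_prime {a b : ℕ} (hab : a ≤ b)
    (h : ∀ k, a < k → k ≤ b → ¬k.Prime) : π b = π a := by
  induction b, hab using Nat.le_induction with
  | base => rfl
  | succ b hb ih =>
    rw [← ih fun k hak hkb => h k hak (hkb.trans b.le_succ), primeCounting_eq_primeCounting'_succ,
      primeCounting', count_succ, if_neg (h (b + 1) (by omega) le_rfl)]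
    rfl

end Nat

theorem primeCounting_eq_of_nthPrime_le_of_lt {k y : ℕ} (h₁ : nthPrime k ≤ y)
    (h₂ : y < nthPrime (k + 1)) : π y = k := by
  obtain _ | k := k
  · simp only [nthPrime, zero_tsub, zero_add, tsub_self] at h₁ h₂
    omega
  · exact primeCounting_eq_of_nth_le_of_lt_nth h₁ h₂

theorem primeCounting_nthPrime {k : ℕ} (hk : 1 ≤ k) : π (nthPrime k) = k :=
  primeCounting_eq_of_nthPrime_le_of_lt le_rfl <| by
    obtain ⟨k, rfl⟩ := Nat.exists_eq_add_of_le' hk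
    exact nth_strictMono infinite_setOfPred_prime k.lt_succ_self

theorem nthPrime_prime (k : ℕ) : (nthPrime k).Prime :=
  prime_nth_prime (k - 1)

def ramanujanCandidates (n : ℕ) : Set ℕ :=
  {R : ℕ | 0 < R ∧ ∀ x : ℕ, R ≤ x → n ≤ π x - π (x / 2)}

theorem ramanujan_eq_sInf (n : ℕ) : ramanujan n = sInf (ramanujanCandidates n) := rfl

theorem le_primeCounting_sub_of_ramanujan_le {n x : ℕ} (hpos : 0 < ramanujan n)
    (hx : ramanujan n ≤ x) : n ≤ π x - π (x / 2) := by
  rw [ramanujan_eq_sInf] at hpos hx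
  have hne : (ramanujanCandidates n).Nonempty := by
    by_contra hempty
    rw [Set.not_nonempty_iff_eq_empty.mp hempty, Nat.sInf_empty] at hpos
    exact hpos.false
  exact (Nat.sInf_mem hne).2 x hx

theorem primeCounting_sub_lt_of_ramanujan {n : ℕ} (h : 2 ≤ ramanujan n) :
    π (ramanujan n - 1) - π ((ramanujan n - 1) / 2) < n := by
  have hnotmem : ramanujan n - 1 ∉ ramanujanCandidates n :=
    Nat.notMem_of_lt_sInf (by rw [← ramanujan_eq_sInf]; omega)
  simp only [ramanujanCandidates, Set.mem_ofPred_eq, not_and, not_forall, not_le] at hnotmem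
  obtain ⟨x, hx, hfail⟩ := hnotmem (by omega)
  obtain rfl : x = ramanujan n - 1 := by
    by_contra hne
    exact hfail.not_ge (le_primeCounting_sub_of_ramanujan_le (by omega) (by omega))
  exact hfail

theorem ramanujan_satisfies_condition2_general (p m : ℕ)
    (hp : p.Prime) (hram : IsRamanujanPrime p)
    (hm1 : 2 * nthPrime m < p) (hm2 : p < 2 * nthPrime (m + 1)) :
    ∃ q : ℕ, q.Prime ∧ p < q ∧ q < 2 * nthPrime (m + 1) := by
  by_contra! hgap
  obtain ⟨n, -, rfl⟩ := hram
  set b := nthPrime (m + 1)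
  have hfail := primeCounting_sub_lt_of_ramanujan hp.two_le
  have hgood := le_primeCounting_sub_of_ramanujan_le hp.pos hm2.le
  rw [Nat.mul_div_cancel_left b two_pos] at hgood
  have hhalf : π ((ramanujan n - 1) / 2) = m :=
    primeCounting_eq_of_nthPrime_le_of_lt (by omega) (by omega)
  have hb : π b = m + 1 := primeCounting_nthPrime (by omega)
  have h2b : π (2 * b) = π (ramanujan n) := by
    refine primeCounting_eq_of_forall_not_prime hm2.le fun k hpk hkb hk => ?_
    obtain rfl : k = 2 * b := le_antisymm hkb (hgap k hk hpk)
    have := (nthPrime_prime (m + 1)).two_le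
    have := hk.even_iff.mp (even_two_mul b)
    omega
  have hp1 := primeCounting_of_prime hp
  omega

/-- If p is an odd Ramanujan prime and m is the unique index with
p_m < p/2 < p_{m+1}, then the open interval (p, 2 p_{m+1}) contains a prime
(Condition 2). -/
theorem ramanujan_satisfies_condition2 (p m : ℕ) (hm : 1 ≤ m)
    (hp : p.Prime) (hodd : Odd p) (hram : IsRamanujanPrime p)
    (hm1 : 2 * nthPrime m < p) (hm2 : p < 2 * nthPrime (m + 1)) :
    ∃ q : ℕ, q.Prime ∧ p < q ∧ q < 2 * nthPrime (m + 1) :=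
  ramanujan_satisfies_condition2_general p m hp hram hm1 hm2
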